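/- arXiv:2205.13658 — 2 statements merged into one kernel-verified Lean document; each statement's English description precedes it below -/
import Mathlib

section
/- Define f_∞(N_S, N_D, N_F) = (N_D + (1−α)·N_F) / (N_S + N_D + (K/(K−1))·(1−α)·N_F) for K ≥ 2, positive reals N_S, N_D, N_F and 1/K < α < 1. Then the partial derivative of f_∞ with respect to N_F (holding N_S, N_D fixed) is positive if and only if N_S > N_D/(K−1). -/
/-
The map x ↦ (N_D + (1 - α) x) / (N_S + N_D + d x) is a Möbius transformation, so its derivative
has the constant sign of the determinant (1 - α)(N_S + N_D) - N_D d. With d = K/(K - 1) (1 - α) and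
K/(K - 1) = 1 + 1/(K - 1), that determinant is (1 - α)(N_S - N_D/(K - 1)).
-/

theorem hasDerivAt_linear_div_linear {𝕜 : Type*} [NontriviallyNormedField 𝕜] (a b c d x : 𝕜)
    (hx : c + d * x ≠ 0) :
    HasDerivAt (fun y => (a + b * y) / (c + d * y)) ((b * c - a * d) / (c + d * x) ^ 2) x := by
  have hnum : HasDerivAt (fun y => a + b * y) b x := by
    simpa using ((hasDerivAt_id x).const_mul b).const_add a
  have hden : HasDerivAt (fun y => c + d * y) d x := by
    simpa using ((hasDerivAt_id x).const_mul d).const_add c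
  exact (hnum.fun_div hden hx).congr_deriv (by ring)

theorem deriv_linear_div_linear_pos_iff (a b c d x : ℝ) (hx : c + d * x ≠ 0) :
    0 < deriv (fun y => (a + b * y) / (c + d * y)) x ↔ a * d < b * c := by
  rw [(hasDerivAt_linear_div_linear a b c d x hx).deriv,
    div_pos_iff_of_pos_right (sq_pos_of_ne_zero hx), sub_pos]

theorem mul_div_sub_one_lt_add_iff {k n s : ℝ} (hk : 1 < k) :
    n * (k / (k - 1)) < s + n ↔ n / (k - 1) < s := by
  have hk' : k / (k - 1) = 1 + 1 / (k - 1) := by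
    field_simp [(sub_pos.mpr hk).ne']
    ring
  rw [hk', mul_add, mul_one, mul_one_div, add_comm s, add_lt_add_iff_left]

theorem jr_abs_effect_general (K : ℕ) (hK : 2 ≤ K) (α N_S N_D N_F : ℝ)
    (hNS : 0 < N_S) (hND : 0 < N_D) (hNF : 0 < N_F)
    (hα2 : α < 1) :
    (0 < deriv (fun x : ℝ =>
        (N_D + (1 - α) * x) /
          (N_S + N_D + ((K : ℝ) / ((K : ℝ) - 1)) * (1 - α) * x)) N_F) ↔
      N_S > N_D / ((K : ℝ) - 1) := by
  have hK1 : (1 : ℝ) < K := by exact_mod_cast hK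
  have hα : 0 < 1 - α := sub_pos.mpr hα2
  have hden : N_S + N_D + (K / (K - 1 : ℝ)) * (1 - α) * N_F ≠ 0 := by
    have : 0 < (K : ℝ) - 1 := sub_pos.mpr hK1
    positivity
  rw [deriv_linear_div_linear_pos_iff _ _ _ _ _ hden, gt_iff_lt,
    ← mul_div_sub_one_lt_add_iff hK1, add_comm N_S, ← mul_assoc, mul_comm (1 - α)]
  exact mul_lt_mul_iff_of_pos_right hα

theorem jr_abs_effect (K : ℕ) (hK : 2 ≤ K) (α N_S N_D N_F : ℝ)
    (hNS : 0 < N_S) (hND : 0 < N_D) (hNF : 0 < N_F)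
    (hα1 : 1 / K < α) (hα2 : α < 1) :
    (0 < deriv (fun x : ℝ =>
        (N_D + (1 - α) * x) /
          (N_S + N_D + ((K : ℝ) / ((K : ℝ) - 1)) * (1 - α) * x)) N_F) ↔
      N_S > N_D / ((K : ℝ) - 1) :=
  jr_abs_effect_general K hK α N_S N_D N_F hNS hND hNF hα2
end

section
/- Fix N > 0, γ > 0, α ∈ (1/K, 1), K ≥ 2, and for β ∈ (0,1) set N_F = β·N, N_S = γ·(1−β)·N/(1+γ), N_D = (1−β)·N/(1+γ). Then the equilibrium integration f_∞ = (N_D + (1−α)·N_F)/(N_S + N_D + (K/(K−1))·(1−α)·N_F) equals (1/(γ+1))·(1 + β·((1−α)(1+γ) − 1))/(1 + β·(1 − Kα)/(K−1)), and its derivative with respect to β equals ((1−α)/(γ+1))·(γ − 1/(K−1))/(1 + β·(1−Kα)/(K−1))^2, which is positive if and only if γ > 1/(K−1). -/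
theorem jr_rel_effect (K : ℕ) (hK : 2 ≤ K) (α N γ : ℝ)
    (hN : 0 < N) (hγ : 0 < γ) (hα1 : 1 / K < α) (hα2 : α < 1)
    (β : ℝ) (hβ : β ∈ Set.Ioo (0 : ℝ) 1) :
    let NF : ℝ → ℝ := fun b => b * N
    let NS : ℝ → ℝ := fun b => γ * (1 - b) * N / (1 + γ)
    let ND : ℝ → ℝ := fun b => (1 - b) * N / (1 + γ)
    let f : ℝ → ℝ := fun b =>
      (ND b + (1 - α) * NF b) /
        (NS b + ND b + ((K : ℝ) / ((K : ℝ) - 1)) * (1 - α) * NF b)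
    f β = (1 / (γ + 1)) *
        (1 + β * ((1 - α) * (1 + γ) - 1)) /
        (1 + β * (1 - (K : ℝ) * α) / ((K : ℝ) - 1)) ∧
    deriv f β = ((1 - α) / (γ + 1)) * (γ - 1 / ((K : ℝ) - 1)) /
        (1 + β * (1 - (K : ℝ) * α) / ((K : ℝ) - 1)) ^ 2 ∧
    (0 < deriv f β ↔ γ > 1 / ((K : ℝ) - 1)) := by
  intro NF NS ND f
  obtain ⟨hβ0, hβ1⟩ := hβ
  have hK2 : (2 : ℝ) ≤ (K : ℝ) := by exact_mod_cast hK
  have hKm : (0 : ℝ) < (K : ℝ) - 1 := by linarith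
  have hKm' : ((K : ℝ) - 1) ≠ 0 := ne_of_gt hKm
  have hK0 : (0 : ℝ) < (K : ℝ) := by linarith
  have hγ1 : (0 : ℝ) < 1 + γ := by linarith
  have hγ1' : (1 + γ) ≠ 0 := ne_of_gt hγ1
  have hKα : 1 < (K : ℝ) * α := by
    rw [div_lt_iff₀ hK0] at hα1; linarith
  set c1 : ℝ := (1 - α) * (1 + γ) - 1 with hc1
  set c2 : ℝ := (1 - (K : ℝ) * α) / ((K : ℝ) - 1) with hc2
  -- positivity of denominator at β
  have hc2neg : c2 < 0 := div_neg_of_neg_of_pos (by linarith) hKm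
  have hDpos : 0 < 1 + β * c2 := by
    have h1 : (0 : ℝ) < 1 + c2 := by
      have he : 1 + c2 = (K : ℝ) * (1 - α) / ((K : ℝ) - 1) := by
        rw [hc2]; field_simp; ring
      rw [he]
      exact div_pos (by nlinarith) hKm
    nlinarith
  have hD' : (1 : ℝ) + β * c2 ≠ 0 := ne_of_gt hDpos
  -- f equals a simpler rational function
  have hfg : f = fun b => (1 / (γ + 1)) * (1 + b * c1) / (1 + b * c2) := by
    funext b
    show (ND b + (1 - α) * NF b) /
        (NS b + ND b + ((K : ℝ) / ((K : ℝ) - 1)) * (1 - α) * NF b) = _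
    have hnum : ND b + (1 - α) * NF b = N / (1 + γ) * (1 + b * c1) := by
      simp only [ND, NF, hc1]; field_simp; ring
    have hden : NS b + ND b + ((K : ℝ) / ((K : ℝ) - 1)) * (1 - α) * NF b
        = N * (1 + b * c2) := by
      simp only [NS, ND, NF, hc2]; field_simp; ring
    rw [hnum, hden]
    rcases eq_or_ne (1 + b * c2) 0 with h | h
    · rw [h, mul_zero, div_zero, div_zero]
    · field_simp
      ring
  -- the value claim
  have hval : f β = (1 / (γ + 1)) * (1 + β * c1) / (1 + β * c2) := by
    rw [hfg]
  -- the derivative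
  have h1 : HasDerivAt (fun b : ℝ => (1 / (γ + 1)) * (1 + b * c1))
      ((1 / (γ + 1)) * (1 * c1)) β :=
    (((hasDerivAt_id β).mul_const c1).const_add 1).const_mul _
  have h2 : HasDerivAt (fun b : ℝ => 1 + b * c2) (1 * c2) β :=
    ((hasDerivAt_id β).mul_const c2).const_add 1
  have hdiv := h1.div h2 hD'
  have hderiv : deriv f β = ((1 - α) / (γ + 1)) * (γ - 1 / ((K : ℝ) - 1)) /
      (1 + β * c2) ^ 2 := by
    rw [hfg, show (fun b : ℝ => 1 / (γ + 1) * (1 + b * c1) / (1 + b * c2)) = ((fun b : ℝ => 1 / (γ + 1) * (1 + b * c1)) / fun b => 1 + b * c2) from rfl, hdiv.deriv, hc1, hc2]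
    field_simp
    ring
  have hrw : 1 + β * (1 - (K : ℝ) * α) / ((K : ℝ) - 1) = 1 + β * c2 := by
    rw [hc2, mul_div_assoc]
  rw [hrw]
  refine ⟨hval, hderiv, ?_⟩
  rw [hderiv]
  have hQ2 : (0 : ℝ) < (1 + β * c2) ^ 2 := pow_pos hDpos 2
  have hca : (0 : ℝ) < (1 - α) / (γ + 1) := div_pos (by linarith) (by linarith)
  rw [lt_div_iff₀ hQ2, zero_mul]
  constructor
  · intro h
    rw [gt_iff_lt, ← sub_pos]
    by_contra hcon
    push_neg at hcon
    nlinarith [mul_nonneg hca.le (show (0 : ℝ) ≤ 1 / ((K : ℝ) - 1) - γ by linarith)]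
  · intro h
    exact mul_pos hca (sub_pos.mpr h)
end
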